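/- arXiv:2307.09214 — 2 statements merged into one kernel-verified Lean document; each statement's English description precedes it below -/
import Mathlib

section
/- Let 𝒟 = [n_1] × … × [n_d] be a d-dimensional grid graph (all n_i ≥ 2) and let V ≥ 1. The sensing region graph 𝒮(𝒟, V) is isomorphic (as a graph) to the d-dimensional grid graph [m_1] × … × [m_d], where m_i := min(n_i, 2V + 1). -/
open Finset

/-- Manhattan (ℓ¹) norm of an integer vector. -/
def manhattan {d : ℕ} (p : Fin d → ℤ) : ℤ := ∑ i, |p i|

/-- The grid graph vertex set `[n 0] × ⋯ × [n (d-1)]`. -/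
def grid {d : ℕ} (n : Fin d → ℕ) : Set (Fin d → ℤ) :=
  {p | ∀ i, 1 ≤ p i ∧ p i ≤ (n i : ℤ)}

/-- Sensing data `S_V(p)`: relative positions of points of `D` within
Manhattan distance `V` of `p`. -/
def sense {d : ℕ} (D : Set (Fin d → ℤ)) (V : ℕ) (p : Fin d → ℤ) : Set (Fin d → ℤ) :=
  {q | p + q ∈ D ∧ manhattan q ≤ (V : ℤ)}

/-- A deterministic agent algorithm with `b` bits of memory: maps sensing data and a
memory state to a step and a new memory state. -/
structure Agent (d b : ℕ) where
  act : Set (Fin d → ℤ) → (Fin b → Bool) → (Fin d → ℤ) × (Fin b → Bool)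

namespace Agent

/-- Validity: at every vertex of `D`, in every memory state, the chosen step is a
unit step leading to a vertex of `D`. -/
def Valid {d b : ℕ} (A : Agent d b) (D : Set (Fin d → ℤ)) (V : ℕ) : Prop :=
  ∀ p ∈ D, ∀ m, manhattan (A.act (sense D V p) m).1 = 1 ∧
    (A.act (sense D V p) m).1 ∈ sense D V p

/-- The trajectory (position, memory) of the agent after `t` steps, starting from
position `v` and memory state `m`. -/
def traj {d b : ℕ} (A : Agent d b) (D : Set (Fin d → ℤ)) (V : ℕ)
    (v : Fin d → ℤ) (m : Fin b → Bool) : ℕ → (Fin d → ℤ) × (Fin b → Bool)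
  | 0 => (v, m)
  | t + 1 =>
      let s := Agent.traj A D V v m t
      (s.1 + (A.act (sense D V s.1) s.2).1, (A.act (sense D V s.1) s.2).2)

/-- The agent patrols `D`: it is valid, and from any initial position in `D` and any
initial memory state, its trajectory visits every vertex of `D` within finitely many
steps. -/
def Patrols {d b : ℕ} (A : Agent d b) (D : Set (Fin d → ℤ)) (V : ℕ) : Prop :=
  A.Valid D V ∧ ∀ v₁ ∈ D, ∀ m, ∀ v ∈ D, ∃ t, (A.traj D V v₁ m t).1 = v

end Agent

/-- The graph on a set of integer vectors with edges between points at Manhattan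
distance 1. -/
def latticeGraph {d : ℕ} (S : Set (Fin d → ℤ)) : SimpleGraph S where
  Adj p q := manhattan (p.1 - q.1) = 1
  symm := by
    constructor
    intro p q h
    simp only [manhattan, Pi.sub_apply] at h ⊢
    simpa [abs_sub_comm] using h
  loopless := by
    constructor
    intro p h
    simp [manhattan] at h

/-- The `d`-dimensional grid graph `[n 0] × ⋯ × [n (d-1)]`. -/
def gridGraph {d : ℕ} (n : Fin d → ℕ) : SimpleGraph (grid n) :=
  latticeGraph (grid n)

/-- The sensing-equivalence relation on the vertices of `𝒟`: two vertices are
equivalent iff they have the same sensing data. Its classes are the sensing regions. -/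
def senseSetoid {d : ℕ} (n : Fin d → ℕ) (V : ℕ) : Setoid (grid n) where
  r p q := sense (grid n) V p.1 = sense (grid n) V q.1
  iseqv := ⟨fun _ => rfl, Eq.symm, Eq.trans⟩

/-- The sensing region graph `𝒮(𝒟, V)`: vertices are the sensing regions, with an
edge between two distinct regions iff some representatives are adjacent in `𝒟`. -/
def senseGraph {d : ℕ} (n : Fin d → ℕ) (V : ℕ) :
    SimpleGraph (Quotient (senseSetoid n V)) where
  Adj R R' := R ≠ R' ∧ ∃ p q : grid n,
    Quotient.mk (senseSetoid n V) p = R ∧ Quotient.mk (senseSetoid n V) q = R' ∧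
    (gridGraph n).Adj p q
  symm := by
    constructor
    rintro R R' ⟨hne, p, q, hp, hq, hadj⟩
    exact ⟨hne.symm, q, p, hq, hp, hadj.symm⟩
  loopless := by
    constructor
    rintro R ⟨hne, -⟩
    exact hne rfl


/-!
Whether `p + q` lies in the box only depends, coordinate by coordinate, on how far `p i` is
from the two ends of `[n i]`, and these distances are only seen up to `V`. So the sensing data
of `p` is the tuple of the one-dimensional sensing data of the `p i` in the paths `[n i]`, and
the regions of a path `[N]` are classified by a monotone surjection `[N] → [min N (2V+1)]` with
steps `0` or `1`. Applied coordinatewise it is `1`-Lipschitz for the `ℓ¹` distance, so adjacent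
vertices go to equal or adjacent vertices, and it has a section along which each unit step of
the small grid lifts to a unit step of the big one.
-/

/-- The sensing data of `x` in the path `[N]`. -/
def window (N V : ℕ) (x : ℤ) : Set ℤ := {t | |t| ≤ V ∧ 1 ≤ x + t ∧ x + t ≤ N}

/-- The identity when `N ≤ 2V + 1`; otherwise it collapses the positions `V + 1, …, N - V`,
which see neither end of the path, to `V + 1`. -/
def compress (N V : ℕ) (x : ℤ) : ℤ := max (min x (V + 1)) (x + min N (2 * V + 1) - N)

def uncompress (N V : ℕ) (y : ℤ) : ℤ := if y ≤ V then y else y + N - min N (2 * V + 1)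

section Compress

variable {N V : ℕ} {x y : ℤ}

lemma compress_mem_Icc (hx : x ∈ Set.Icc 1 (N : ℤ)) :
    compress N V x ∈ Set.Icc 1 ((min N (2 * V + 1) : ℕ) : ℤ) := by
  rw [Set.mem_Icc] at *; unfold compress; omega

lemma abs_compress_sub_le : |compress N V x - compress N V y| ≤ |x - y| := by
  have := le_abs_self (x - y)
  have := neg_abs_le (x - y)
  unfold compress; rw [abs_le]; omega

lemma uncompress_mem_Icc (hy : y ∈ Set.Icc 1 ((min N (2 * V + 1) : ℕ) : ℤ)) :
    uncompress N V y ∈ Set.Icc 1 (N : ℤ) := by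
  rw [Set.mem_Icc] at *; unfold uncompress; split_ifs <;> omega

lemma uncompress_add_one_le (h : y + 1 ≤ min N (2 * V + 1)) : uncompress N V y + 1 ≤ N := by
  unfold uncompress; split_ifs <;> omega

lemma compress_uncompress : compress N V (uncompress N V y) = y := by
  unfold compress uncompress; split_ifs <;> omega

lemma compress_uncompress_add_one : compress N V (uncompress N V y + 1) = y + 1 := by
  unfold compress uncompress; split_ifs <;> omega

lemma window_eq_window_iff (hx : x ∈ Set.Icc 1 (N : ℤ)) (hy : y ∈ Set.Icc 1 (N : ℤ)) :
    window N V x = window N V y ↔ compress N V x = compress N V y := by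
  rw [Set.mem_Icc] at hx hy
  simp only [Set.ext_iff, window, Set.mem_ofPred_eq, abs_le, compress]
  constructor
  · intro h
    have h1 := h (1 - min x (V + 1))
    have h2 := h (1 - min y (V + 1))
    have h3 := h (min (N - x) V)
    have h4 := h (min (N - y) V)
    omega
  · intro h t
    omega

end Compress

section Manhattan

variable {d : ℕ}

lemma manhattan_nonneg (x : Fin d → ℤ) : 0 ≤ manhattan x :=
  sum_nonneg fun i _ => abs_nonneg (x i)

lemma manhattan_eq_zero_iff {x : Fin d → ℤ} : manhattan x = 0 ↔ x = 0 := by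
  simp [manhattan, sum_eq_zero_iff_of_nonneg, funext_iff]

lemma manhattan_le_manhattan {x y : Fin d → ℤ} (h : ∀ i, |x i| ≤ |y i|) :
    manhattan x ≤ manhattan y :=
  sum_le_sum fun i _ => h i

lemma abs_le_manhattan (x : Fin d → ℤ) (i : Fin d) : |x i| ≤ manhattan x :=
  single_le_sum (fun j _ => abs_nonneg (x j)) (mem_univ i)

lemma manhattan_neg (x : Fin d → ℤ) : manhattan (-x) = manhattan x := by
  simp [manhattan]

lemma manhattan_single (i : Fin d) (t : ℤ) : manhattan (Pi.single i t) = |t| := by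
  rw [manhattan, Fintype.sum_eq_single i fun j hj => by simp [Pi.single_eq_of_ne hj]]
  simp

lemma manhattan_eq_one_iff {x : Fin d → ℤ} :
    manhattan x = 1 ↔ ∃ i, x = Pi.single i 1 ∨ x = -Pi.single i 1 := by
  refine ⟨fun h => ?_, ?_⟩
  · obtain ⟨i, hi⟩ : ∃ i, x i ≠ 0 := by
      by_contra! h0
      rw [funext h0, ← Pi.zero_def, manhattan_eq_zero_iff.2 rfl] at h
      exact zero_ne_one h
    have hsplit := add_sum_erase univ (fun j => |x j|) (mem_univ i)
    have hrest := sum_nonneg fun j (_ : j ∈ univ.erase i) => abs_nonneg (x j)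
    have hxi_pos := abs_pos.2 hi
    rw [manhattan] at h
    have hxi : |x i| = 1 := by omega
    have hzero : ∀ j ≠ i, x j = 0 := fun j hj => abs_eq_zero.1 <|
      (sum_eq_zero_iff_of_nonneg fun j _ => abs_nonneg (x j)).1 (by omega) j
        (mem_erase.2 ⟨hj, mem_univ j⟩)
    have hx : x = Pi.single i (x i) := funext fun j => by
      rcases eq_or_ne j i with rfl | hj
      · simp
      · simp [Pi.single_eq_of_ne hj, hzero j hj]
    rcases (abs_eq zero_le_one).1 hxi with h1 | h1
    · exact ⟨i, Or.inl (h1 ▸ hx)⟩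
    · exact ⟨i, Or.inr (by rw [hx, h1, Pi.single_neg])⟩
  · rintro ⟨i, rfl | rfl⟩ <;> simp [manhattan_neg, manhattan_single]

lemma latticeGraph_adj_iff {S : Set (Fin d → ℤ)} {p q : S} :
    (latticeGraph S).Adj p q ↔ ∃ i, q.1 = p.1 + Pi.single i 1 ∨ p.1 = q.1 + Pi.single i 1 := by
  change manhattan (p.1 - q.1) = 1 ↔ _
  rw [manhattan_eq_one_iff]
  refine exists_congr fun i => ⟨?_, ?_⟩ <;> rintro (h | h)
  · exact Or.inr (by rw [← h]; abel)
  · exact Or.inl (by rw [← neg_neg (Pi.single i 1), ← h]; abel)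
  · exact Or.inr (by rw [h]; abel)
  · exact Or.inl (by rw [h]; abel)

end Manhattan

section Grid

variable {d : ℕ} (n : Fin d → ℕ) (V : ℕ)

lemma add_single_mem_grid_iff {p : Fin d → ℤ} (hp : p ∈ grid n) (i : Fin d) (t : ℤ) :
    p + Pi.single i t ∈ grid n ↔ 1 ≤ p i + t ∧ p i + t ≤ n i := by
  refine ⟨fun h => by simpa using h i, fun h j => ?_⟩
  rcases eq_or_ne j i with rfl | hj
  · simpa using h
  · simpa [Pi.single_eq_of_ne hj] using hp j

lemma single_mem_sense_iff {p : Fin d → ℤ} (hp : p ∈ grid n) (i : Fin d) (t : ℤ) :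
    Pi.single i t ∈ sense (grid n) V p ↔ t ∈ window (n i) V (p i) := by
  simp only [sense, window, Set.mem_ofPred_eq, add_single_mem_grid_iff n hp, manhattan_single]
  tauto

lemma sense_eq_sense_iff {p q : Fin d → ℤ} (hp : p ∈ grid n) (hq : q ∈ grid n) :
    sense (grid n) V p = sense (grid n) V q ↔
      ∀ i, window (n i) V (p i) = window (n i) V (q i) := by
  refine ⟨fun h i => ?_, fun h => ?_⟩
  · ext t
    rw [← single_mem_sense_iff n V hp, ← single_mem_sense_iff n V hq, h]
  · ext v
    simp only [sense, Set.mem_ofPred_eq, and_congr_left_iff]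
    intro hv
    have key : ∀ r : Fin d → ℤ, r + v ∈ grid n ↔ ∀ i, v i ∈ window (n i) V (r i) :=
      fun r => forall_congr' fun i => by
        simp [window, (abs_le_manhattan v i).trans hv]
    simp only [key, h]

def compressGrid (p : grid n) : grid (fun i => min (n i) (2 * V + 1)) :=
  ⟨fun i => compress (n i) V (p.1 i), fun i => compress_mem_Icc (p.2 i)⟩

def uncompressGrid (a : grid (fun i => min (n i) (2 * V + 1))) : grid n :=
  ⟨fun i => uncompress (n i) V (a.1 i), fun i => uncompress_mem_Icc (a.2 i)⟩

lemma compressGrid_uncompressGrid (a : grid (fun i => min (n i) (2 * V + 1))) :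
    compressGrid n V (uncompressGrid n V a) = a :=
  Subtype.ext <| funext fun _ => compress_uncompress

lemma compressGrid_eq_iff (p q : grid n) :
    compressGrid n V p = compressGrid n V q ↔ sense (grid n) V p.1 = sense (grid n) V q.1 := by
  rw [sense_eq_sense_iff n V p.2 q.2, Subtype.ext_iff, funext_iff]
  exact forall_congr' fun i => (window_eq_window_iff (p.2 i) (q.2 i)).symm

lemma gridGraph_adj_compressGrid {p q : grid n} (h : (gridGraph n).Adj p q)
    (hne : compressGrid n V p ≠ compressGrid n V q) :
    (gridGraph _).Adj (compressGrid n V p) (compressGrid n V q) := by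
  have hle : manhattan ((compressGrid n V p).1 - (compressGrid n V q).1) ≤ manhattan (p.1 - q.1) :=
    manhattan_le_manhattan fun i => abs_compress_sub_le
  have hne0 : manhattan ((compressGrid n V p).1 - (compressGrid n V q).1) ≠ 0 := by
    rwa [Ne, manhattan_eq_zero_iff, sub_eq_zero, ← Subtype.ext_iff]
  have h1 : manhattan (p.1 - q.1) = 1 := h
  change manhattan _ = 1
  have := manhattan_nonneg ((compressGrid n V p).1 - (compressGrid n V q).1)
  omega

lemma exists_gridGraph_adj_compressGrid_eq_add_single
    {a b : grid (fun i => min (n i) (2 * V + 1))} {i : Fin d} (hab : b.1 = a.1 + Pi.single i 1) :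
    ∃ p q : grid n, (gridGraph n).Adj p q ∧ compressGrid n V p = a ∧ compressGrid n V q = b := by
  set p := uncompressGrid n V a
  have hbi : a.1 i + 1 ≤ min (n i) (2 * V + 1) := by simpa [hab] using (b.2 i).2
  have hq : p.1 + Pi.single i 1 ∈ grid n := (add_single_mem_grid_iff n p.2 i 1).2
    ⟨by have := (p.2 i).1; omega, uncompress_add_one_le hbi⟩
  refine ⟨p, ⟨_, hq⟩, latticeGraph_adj_iff.2 ⟨i, Or.inl rfl⟩,
    compressGrid_uncompressGrid n V a, Subtype.ext <| funext fun j => ?_⟩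
  rw [hab]
  rcases eq_or_ne j i with rfl | hj
  · simp [compressGrid, p, uncompressGrid, compress_uncompress_add_one]
  · simp [compressGrid, p, uncompressGrid, Pi.single_eq_of_ne hj, compress_uncompress]

lemma exists_gridGraph_adj_compressGrid_eq {a b : grid (fun i => min (n i) (2 * V + 1))}
    (h : (gridGraph _).Adj a b) :
    ∃ p q : grid n, (gridGraph n).Adj p q ∧ compressGrid n V p = a ∧ compressGrid n V q = b := by
  obtain ⟨i, hab | hba⟩ := latticeGraph_adj_iff.1 h
  · exact exists_gridGraph_adj_compressGrid_eq_add_single n V hab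
  · obtain ⟨q, p, hqp, hq, hp⟩ := exists_gridGraph_adj_compressGrid_eq_add_single n V hba
    exact ⟨p, q, hqp.symm, hp, hq⟩

end Grid

section Iso

variable {d : ℕ} {n : Fin d → ℕ} {V : ℕ} {β : Type*} {H : SimpleGraph β}

noncomputable def senseGraphIsoOfSurjective (f : grid n → β)
    (hf : ∀ p q, f p = f q ↔ sense (grid n) V p.1 = sense (grid n) V q.1)
    (hsurj : Function.Surjective f)
    (hadj : ∀ p q, (gridGraph n).Adj p q → f p ≠ f q → H.Adj (f p) (f q))
    (hlift : ∀ a b, H.Adj a b → ∃ p q, (gridGraph n).Adj p q ∧ f p = a ∧ f q = b) :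
    senseGraph n V ≃g H where
  toEquiv := Equiv.ofBijective (Quotient.lift f fun p q h => (hf p q).2 h)
    ⟨fun P Q => Quotient.inductionOn₂ P Q fun p q h => Quotient.sound ((hf p q).1 h),
      (Quot.surjective_lift _).2 hsurj⟩
  map_rel_iff' {P Q} := by
    induction P using Quotient.inductionOn with | _ p => ?_
    induction Q using Quotient.inductionOn with | _ q => ?_
    change H.Adj (f p) (f q) ↔ _
    refine ⟨fun h => ?_, ?_⟩
    · obtain ⟨p', q', hpq', hp', hq'⟩ := hlift _ _ h
      refine ⟨fun hpq => h.ne ((hf p q).2 (Quotient.exact hpq)), p', q', ?_, ?_, hpq'⟩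
      · exact Quotient.sound ((hf p' p).1 hp')
      · exact Quotient.sound ((hf q' q).1 hq')
    · rintro ⟨hne, p', q', hp', hq', hpq'⟩
      rw [(hf p p').2 (Quotient.exact hp'.symm), (hf q q').2 (Quotient.exact hq'.symm)]
      refine hadj p' q' hpq' fun h => hne ?_
      rw [← hp', ← hq']
      exact Quotient.sound ((hf p' q').1 h)

end Iso

theorem senseGraph_iso_grid_general {d : ℕ} (n : Fin d → ℕ) (V : ℕ) :
    Nonempty (senseGraph n V ≃g gridGraph (fun i => min (n i) (2 * V + 1))) :=
  ⟨senseGraphIsoOfSurjective (compressGrid n V) (compressGrid_eq_iff n V)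
    (Function.RightInverse.surjective (compressGrid_uncompressGrid n V))
    (fun _ _ => gridGraph_adj_compressGrid n V)
    (fun _ _ => exists_gridGraph_adj_compressGrid_eq n V)⟩

/-- The sensing region graph of `𝒟 = [n 0] × ⋯ × [n (d-1)]` with
sensing range `V ≥ 1` is isomorphic to the grid graph `[m 0] × ⋯ × [m (d-1)]` with
`m i = min (n i) (2V + 1)`. -/
theorem senseGraph_iso_grid {d : ℕ} (hd : 1 ≤ d) (n : Fin d → ℕ)
    (hn : ∀ i, 2 ≤ n i) (V : ℕ) (hV : 1 ≤ V) :
    Nonempty (senseGraph n V ≃g gridGraph (fun i => min (n i) (2 * V + 1))) :=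
  senseGraph_iso_grid_general n V
end

section
/- For every sensing range V ≥ 1 there exists a grid graph that no agent algorithm with 0 bits of memory and sensing range V patrols; in particular, no agent algorithm with 0 bits of memory and sensing range V patrols the 2-dimensional grid graph [2V+2] × [2V+2]. -/
open Finset

/-
A memoryless agent moves by a map `f p = p + s(S_V(p))`. If it patrols, every orbit covers the
grid, so `f` is a single cycle: it is injective and has no 2-cycle. On the `(2V+2) × (2V+2)` grid,
two vertices that differ only in a coordinate lying in `{V+1, V+2}` see the same sensing data.
Let `s` be the step taken at the center `(V+1, V+1)` and follow the line through the center in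
direction `s` together with its neighbouring parallel line through the central block: their
vertices move in lock-step, so a step backwards would close a 2-cycle and a step sideways would
merge the two lines. Hence both lines keep moving in direction `s` until they leave the grid,
which is absurd.
-/

open Set

section Cycle

variable {α : Type*} {f : α → α} {D : Set α}

theorem surjOn_of_forall_exists_iterate_eq (hmaps : MapsTo f D D)
    (hcover : ∀ a ∈ D, ∀ b ∈ D, ∃ t, f^[t] a = b) : SurjOn f D D := by
  intro b hb
  obtain ⟨t, ht⟩ := hcover (f b) (hmaps hb) b hb
  exact ⟨f^[t] b, hmaps.iterate t hb, by
    rw [← Function.iterate_succ_apply' f t b, Function.iterate_succ_apply, ht]⟩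

theorem injOn_of_forall_exists_iterate_eq (hD : D.Finite) (hmaps : MapsTo f D D)
    (hcover : ∀ a ∈ D, ∀ b ∈ D, ∃ t, f^[t] a = b) : InjOn f D :=
  ((hD.surjOn_iff_bijOn_of_mapsTo hmaps).mp
    (surjOn_of_forall_exists_iterate_eq hmaps hcover)).injOn

theorem subset_pair_of_two_cycle (hcover : ∀ a ∈ D, ∀ b ∈ D, ∃ t, f^[t] a = b) {a b : α}
    (ha : a ∈ D) (hab : f a = b) (hba : f b = a) : D ⊆ {a, b} := by
  intro c hc
  obtain ⟨t, rfl⟩ := hcover a ha c hc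
  clear hc
  induction t with
  | zero => exact Or.inl rfl
  | succ t ih =>
    rw [Function.iterate_succ_apply']
    rcases ih with h | h <;> rw [h]
    exacts [Or.inr hab, Or.inl hba]

end Cycle

section Lockstep

variable {G : Type*} [AddCommGroup G] {f : G → G} {D : Set G} {u w : G}

theorem apply_add_eq_of_lockstep (hinj : InjOn f D)
    (hcover : ∀ a ∈ D, ∀ b ∈ D, ∃ t, f^[t] a = b) (hw0 : w ≠ 0) (hwu : w ≠ u) (hwu' : w ≠ -u)
    {a : G} (ha : a ∈ D) (hfa : f a = a + u) (haw : a + w ∈ D) (hfaw : f (a + w) = f a + w)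
    (hau : a + u ∈ D) (hauw : a + u + w ∈ D) (hfauw : f (a + u + w) = f (a + u) + w)
    (hstep : f (a + u) = a + u + u ∨ f (a + u) = a + u - u ∨ f (a + u) = a + u + w ∨
      f (a + u) = a + u - w) :
    f (a + u) = a + u + u := by
  rcases hstep with h | h | h | h
  · exact h
  · rw [add_sub_cancel_right] at h
    have hsub := subset_pair_of_two_cycle hcover ha hfa h haw
    rcases hsub with h' | h'
    · exact absurd (add_eq_left.mp h') hw0
    · exact absurd (add_left_cancel h') hwu
  · have := hinj haw hau (by rw [hfaw, hfa, h])
    exact absurd (add_left_cancel this) hwu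
  · have := hinj hauw ha (by rw [hfauw, hfa, h, sub_add_cancel])
    rw [add_assoc, add_eq_left, add_comm, ← eq_neg_iff_add_eq_zero] at this
    exact absurd this hwu'

theorem add_nsmul_mem_of_lockstep (hmaps : MapsTo f D D) (hinj : InjOn f D)
    (hcover : ∀ a ∈ D, ∀ b ∈ D, ∃ t, f^[t] a = b) (hw0 : w ≠ 0) (hwu : w ≠ u) (hwu' : w ≠ -u)
    (hstep : ∀ a ∈ D, f a = a + u ∨ f a = a - u ∨ f a = a + w ∨ f a = a - w)
    {p : G} (hp : p ∈ D) (hfp : f p = p + u)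
    (hline : ∀ k : ℕ, p + k • u ∈ D → p + k • u + w ∈ D ∧ f (p + k • u + w) = f (p + k • u) + w)
    (k : ℕ) : p + k • u ∈ D := by
  suffices ∀ k : ℕ, p + k • u ∈ D ∧ f (p + k • u) = p + k • u + u from (this k).1
  intro k
  induction k with
  | zero => simpa using ⟨hp, hfp⟩
  | succ k ih =>
    obtain ⟨hk, hfk⟩ := ih
    have hk' : p + k • u + u ∈ D := hfk ▸ hmaps hk
    rw [succ_nsmul, ← add_assoc]
    have hline' := hline (k + 1) (by rwa [succ_nsmul, ← add_assoc])
    rw [succ_nsmul, ← add_assoc] at hline'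
    exact ⟨hk', apply_add_eq_of_lockstep hinj hcover hw0 hwu hwu' hk hfk (hline k hk).1
      (hline k hk).2 hk' hline'.1 hline'.2 (hstep _ hk')⟩

end Lockstep

namespace Agent

def stepMap {d : ℕ} (A : Agent d 0) (D : Set (Fin d → ℤ)) (V : ℕ) (p : Fin d → ℤ) :
    Fin d → ℤ :=
  p + (A.act (sense D V p) Fin.elim0).1

variable {d : ℕ} {D : Set (Fin d → ℤ)} {V : ℕ}

theorem traj_fst_eq_iterate (A : Agent d 0) (v : Fin d → ℤ) (m : Fin 0 → Bool) (t : ℕ) :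
    (A.traj D V v m t).1 = (A.stepMap D V)^[t] v := by
  induction t with
  | zero => rfl
  | succ t ih =>
    rw [Function.iterate_succ_apply', ← ih, traj, Subsingleton.elim (A.traj D V v m t).2 Fin.elim0]
    rfl

theorem stepMap_add_of_sense_eq (A : Agent d 0) {p w : Fin d → ℤ}
    (h : sense D V (p + w) = sense D V p) : A.stepMap D V (p + w) = A.stepMap D V p + w := by
  rw [stepMap, stepMap, h]
  abel

variable {A : Agent d 0}

theorem Patrols.mapsTo (h : A.Patrols D V) : MapsTo (A.stepMap D V) D D :=
  fun p hp => (h.1 p hp Fin.elim0).2.1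

theorem Patrols.manhattan_stepMap_sub (h : A.Patrols D V) {p : Fin d → ℤ} (hp : p ∈ D) :
    manhattan (A.stepMap D V p - p) = 1 := by
  rw [stepMap, add_sub_cancel_left]
  exact (h.1 p hp Fin.elim0).1

theorem Patrols.exists_iterate_eq (h : A.Patrols D V) :
    ∀ a ∈ D, ∀ b ∈ D, ∃ t, (A.stepMap D V)^[t] a = b := fun a ha b hb => by
  simpa only [traj_fst_eq_iterate] using h.2 a ha Fin.elim0 b hb

end Agent

theorem grid_finite {d : ℕ} (n : Fin d → ℕ) : (grid n).Finite :=
  (Set.finite_Icc (1 : Fin d → ℤ) (fun i => (n i : ℤ))).subset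
    fun _ hp => ⟨fun i => (hp i).1, fun i => (hp i).2⟩

theorem sense_grid_eq {d : ℕ} {n : Fin d → ℕ} {V : ℕ} {p p' : Fin d → ℤ}
    (h : ∀ i, p i = p' i ∨ (V + 1 ≤ p i ∧ p i + V ≤ n i ∧ V + 1 ≤ p' i ∧ p' i + V ≤ n i)) :
    sense (grid n) V p = sense (grid n) V p' := by
  ext q
  refine and_congr_left fun hq => forall_congr' fun i => ?_
  have hqi : |q i| ≤ V :=
    (single_le_sum (fun j _ => abs_nonneg (q j)) (mem_univ i)).trans hq
  obtain ⟨hqi₁, hqi₂⟩ := abs_le.mp hqi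
  simp only [Pi.add_apply]
  rcases h i with h | h
  · rw [h]
  · omega

section Plane

theorem manhattan_eq_one_iff_s14 {v : Fin 2 → ℤ} :
    manhattan v = 1 ↔ v = ![1, 0] ∨ v = ![-1, 0] ∨ v = ![0, 1] ∨ v = ![0, -1] := by
  constructor
  · intro h
    have h' : |v 0| + |v 1| = 1 := by simpa [manhattan, Fin.sum_univ_two] using h
    have hv : v = ![v 0, v 1] := by ext i; fin_cases i <;> rfl
    have hcoord : (v 0 = 1 ∧ v 1 = 0) ∨ (v 0 = -1 ∧ v 1 = 0) ∨ (v 0 = 0 ∧ v 1 = 1) ∨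
        (v 0 = 0 ∧ v 1 = -1) := by
      rcases abs_cases (v 0) with ⟨_, _⟩ | ⟨_, _⟩ <;>
        rcases abs_cases (v 1) with ⟨_, _⟩ | ⟨_, _⟩ <;> omega
    rw [hv]
    rcases hcoord with ⟨h0, h1⟩ | ⟨h0, h1⟩ | ⟨h0, h1⟩ | ⟨h0, h1⟩ <;> simp [h0, h1]
  · rintro (rfl | rfl | rfl | rfl) <;> decide

-- For a unit vector `s`, the positive unit vector along the other axis.
def otherAxis (s : Fin 2 → ℤ) : Fin 2 → ℤ := ![|s 1|, |s 0|]

variable {s : Fin 2 → ℤ}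

theorem eq_or_eq_otherAxis (hs : manhattan s = 1) {v : Fin 2 → ℤ} (hv : manhattan v = 1) :
    v = s ∨ v = -s ∨ v = otherAxis s ∨ v = -otherAxis s := by
  rcases manhattan_eq_one_iff_s14.mp hs with rfl | rfl | rfl | rfl <;>
    rcases manhattan_eq_one_iff_s14.mp hv with rfl | rfl | rfl | rfl <;> decide

theorem otherAxis_ne (hs : manhattan s = 1) :
    otherAxis s ≠ 0 ∧ otherAxis s ≠ s ∧ otherAxis s ≠ -s := by
  rcases manhattan_eq_one_iff_s14.mp hs with rfl | rfl | rfl | rfl <;> decide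

variable {V : ℕ}

theorem center_mem_grid : (fun _ => (V : ℤ) + 1) ∈ grid (fun _ : Fin 2 => 2 * V + 2) :=
  fun _ => ⟨by simp, by push_cast; omega⟩

theorem center_add_nsmul_notMem_grid (hs : manhattan s = 1) :
    (fun _ => (V : ℤ) + 1) + (V + 2) • s ∉ grid (fun _ : Fin 2 => 2 * V + 2) := by
  rcases manhattan_eq_one_iff_s14.mp hs with rfl | rfl | rfl | rfl <;>
    simp only [grid, Set.mem_ofPred_eq, Fin.forall_fin_two, Pi.add_apply, Pi.smul_apply,
      Matrix.cons_val_zero, Matrix.cons_val_one] <;> push_cast [nsmul_eq_mul] <;> omega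

theorem center_add_nsmul_add_otherAxis (hs : manhattan s = 1) {k : ℕ}
    (hk : (fun _ => (V : ℤ) + 1) + k • s ∈ grid (fun _ : Fin 2 => 2 * V + 2)) :
    (fun _ => (V : ℤ) + 1) + k • s + otherAxis s ∈ grid (fun _ : Fin 2 => 2 * V + 2) ∧
      sense (grid (fun _ : Fin 2 => 2 * V + 2)) V ((fun _ => (V : ℤ) + 1) + k • s + otherAxis s) =
        sense (grid (fun _ : Fin 2 => 2 * V + 2)) V ((fun _ => (V : ℤ) + 1) + k • s) := by
  refine ⟨?_, sense_grid_eq ?_⟩ <;>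
  · rcases manhattan_eq_one_iff_s14.mp hs with rfl | rfl | rfl | rfl <;>
      simp only [grid, Set.mem_ofPred_eq, Fin.forall_fin_two, Pi.add_apply, Pi.smul_apply,
        otherAxis, Matrix.cons_val_zero, Matrix.cons_val_one] at hk ⊢ <;>
      push_cast [nsmul_eq_mul, abs_neg, abs_one, abs_zero] at hk ⊢ <;> omega

end Plane

theorem not_exists_patrols_grid_two (V : ℕ) :
    ¬ ∃ A : Agent 2 0, A.Patrols (grid (fun _ : Fin 2 => 2 * V + 2)) V := by
  rintro ⟨A, hA⟩
  set D := grid (fun _ : Fin 2 => 2 * V + 2)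
  set f := A.stepMap D V
  set c : Fin 2 → ℤ := fun _ => (V : ℤ) + 1
  set s := f c - c
  have hs : manhattan s = 1 := hA.manhattan_stepMap_sub center_mem_grid
  obtain ⟨hw0, hws, hws'⟩ := otherAxis_ne hs
  have hinj : InjOn f D :=
    injOn_of_forall_exists_iterate_eq (grid_finite _) hA.mapsTo hA.exists_iterate_eq
  have hstep : ∀ a ∈ D, f a = a + s ∨ f a = a - s ∨ f a = a + otherAxis s ∨
      f a = a - otherAxis s := fun a ha => by
    rcases eq_or_eq_otherAxis hs (hA.manhattan_stepMap_sub ha) with h | h | h | h <;>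
      simp only [sub_eq_iff_eq_add', ← sub_eq_add_neg] at h <;> tauto
  have hline (k : ℕ) (hk : c + k • s ∈ D) :
      c + k • s + otherAxis s ∈ D ∧ f (c + k • s + otherAxis s) = f (c + k • s) + otherAxis s :=
    let h := center_add_nsmul_add_otherAxis hs hk
    ⟨h.1, A.stepMap_add_of_sense_eq h.2⟩
  exact center_add_nsmul_notMem_grid hs <| add_nsmul_mem_of_lockstep hA.mapsTo hinj
    hA.exists_iterate_eq hw0 hws hws' hstep center_mem_grid (add_sub_cancel c (f c)).symm hline _

theorem exists_unpatrollable_grid_for_every_V_general (V : ℕ) :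
    (∃ (d : ℕ) (n : Fin d → ℕ), 1 ≤ d ∧ (∀ i, 2 ≤ n i) ∧
      ¬ ∃ A : Agent d 0, A.Patrols (grid n) V) ∧
    ¬ ∃ A : Agent 2 0, A.Patrols (grid (fun _ : Fin 2 => 2 * V + 2)) V :=
  ⟨⟨2, fun _ => 2 * V + 2, by norm_num, fun _ => by simp, not_exists_patrols_grid_two V⟩,
    not_exists_patrols_grid_two V⟩

/-- For every sensing range `V ≥ 1` there is a grid graph that no
agent algorithm with `0` bits of memory and sensing range `V` patrols; in particular,
no such algorithm patrols the 2-dimensional grid graph `[2V+2] × [2V+2]`. -/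
theorem exists_unpatrollable_grid_for_every_V (V : ℕ) (hV : 1 ≤ V) :
    (∃ (d : ℕ) (n : Fin d → ℕ), 1 ≤ d ∧ (∀ i, 2 ≤ n i) ∧
      ¬ ∃ A : Agent d 0, A.Patrols (grid n) V) ∧
    ¬ ∃ A : Agent 2 0, A.Patrols (grid (fun _ : Fin 2 => 2 * V + 2)) V :=
  exists_unpatrollable_grid_for_every_V_general V
end
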